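/- arXiv:1507.05061 — 3 statements merged into one kernel-verified Lean document; each statement's English description precedes it below -/
import Mathlib

section
/- Let N ≥ 1 and d : Fin N → ℕ with d_k ≤ m for all k, and suppose (1/N)·∑_k d_k = (7/8)·m. Then (1/N)·∑_k sin²(d_k π/(2m)) ≤ sin(7π/16) < 0.981. -/
open Real Finset

theorem success_prob_upper (N m : ℕ) (hN : 1 ≤ N) (hm : 0 < m)
    (d : Fin N → ℕ) (hd : ∀ k, d k ≤ m)
    (havg : (1 / N : ℝ) * ∑ k, (d k : ℝ) = (7 / 8) * m) :
    (1 / N : ℝ) * ∑ k, Real.sin (d k * Real.pi / (2 * m)) ^ 2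
        ≤ Real.sin (7 * Real.pi / 16) ∧
    Real.sin (7 * Real.pi / 16) < 0.981 := by
  have hmR : (0:ℝ) < m := by exact_mod_cast hm
  have hNR : (0:ℝ) < N := by exact_mod_cast hN
  set x : Fin N → ℝ := fun k => (d k : ℝ) * Real.pi / (2 * m) with hx
  have hxmem : ∀ k, x k ∈ Set.Icc (0:ℝ) Real.pi := by
    intro k
    have hdk : (d k : ℝ) ≤ m := by exact_mod_cast hd k
    constructor
    · positivity
    · rw [div_le_iff₀ (by positivity)]
      nlinarith [Real.pi_pos, (d k).cast_nonneg (α := ℝ)]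
  constructor
  · have step1 : (1 / N : ℝ) * ∑ k, Real.sin (x k) ^ 2
        ≤ (1 / N : ℝ) * ∑ k, Real.sin (x k) := by
      apply mul_le_mul_of_nonneg_left _ (by positivity)
      apply Finset.sum_le_sum
      intro k _
      have h0 := Real.sin_nonneg_of_nonneg_of_le_pi (hxmem k).1 (hxmem k).2
      have h1 := Real.sin_le_one (x k)
      nlinarith
    have jensen : ∑ k, (1 / N : ℝ) • Real.sin (x k)
        ≤ Real.sin (∑ k, (1 / N : ℝ) • x k) := by
      apply strictConcaveOn_sin_Icc.concaveOn.le_map_sum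
      · intro i _; positivity
      · rw [Finset.sum_const, Finset.card_univ, Fintype.card_fin, nsmul_eq_mul]
        field_simp
      · intro i _; exact hxmem i
    have havgx : ∑ k, (1 / N : ℝ) • x k = 7 * Real.pi / 16 := by
      simp only [smul_eq_mul, hx]
      rw [← Finset.mul_sum]
      have : ∑ k, (d k : ℝ) * Real.pi / (2 * m) = (∑ k, (d k : ℝ)) * (Real.pi / (2*m)) := by
        rw [Finset.sum_mul]; congr 1; ext k; ring
      rw [this, ← mul_assoc, havg]
      field_simp
      ring
    calc (1 / N : ℝ) * ∑ k, Real.sin (x k) ^ 2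
        ≤ (1 / N : ℝ) * ∑ k, Real.sin (x k) := step1
      _ = ∑ k, (1 / N : ℝ) • Real.sin (x k) := by rw [Finset.mul_sum]; rfl
      _ ≤ Real.sin (∑ k, (1 / N : ℝ) • x k) := jensen
      _ = Real.sin (7 * Real.pi / 16) := by rw [havgx]
  · have h1 : Real.sin (7 * Real.pi / 16) = Real.cos (Real.pi / 16) := by
      rw [← Real.cos_pi_div_two_sub]; congr 1; ring
    rw [h1]
    set t : ℝ := Real.pi / 16 with ht
    have hpi1 : Real.pi < 3.141593 := Real.pi_lt_d6
    have hpi2 : 3.141592 < Real.pi := Real.pi_gt_d6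
    have htpos : 0 < t := by positivity
    have ht1 : |t| ≤ 1 := by rw [abs_of_pos htpos]; simp only [ht]; linarith
    have := Real.cos_bound ht1
    rw [abs_le, abs_of_pos htpos] at this
    have htub : t < 0.19635 := by simp only [ht]; linarith
    have htlb : 0.19634 < t := by simp only [ht]; linarith
    have ht2lb : 0.038549 < t^2 := by nlinarith
    have ht2ub : t^2 < 0.038566 := by nlinarith
    have ht4 : t^4 < 0.0014874 := by nlinarith [sq_nonneg (t^2)]
    linarith [this.2]
end

section
/- Let N ≥ 1, m ≥ 1, and d : Fin N → ℕ with d_k ≤ m for all k and (1/N)·∑_k d_k = (7/8)·m. Then (1/N)·∑_k sin²(d_k π/(2m)) ≥ 1 − π²/32 > 0.691. -/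
open Real Finset

theorem success_prob_lower (N m : ℕ) (hN : 1 ≤ N) (hm : 1 ≤ m)
    (d : Fin N → ℕ) (hd : ∀ k, d k ≤ m)
    (havg : (1 / N : ℝ) * ∑ k, (d k : ℝ) = (7 / 8) * m) :
    1 - Real.pi ^ 2 / 32 ≤ (1 / N : ℝ) * ∑ k, Real.sin (d k * Real.pi / (2 * m)) ^ 2 ∧
    (0.691 : ℝ) < 1 - Real.pi ^ 2 / 32 := by
  have hmR : (0:ℝ) < m := by exact_mod_cast hm
  have hNR : (0:ℝ) < N := by exact_mod_cast hN
  have hpi := Real.pi_pos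
  constructor
  · have key : ∀ k, 1 - Real.pi^2/4 * (((m:ℝ) - d k)/m) ≤ Real.sin (d k * Real.pi / (2 * m)) ^ 2 := by
      intro k
      have hdk : (d k : ℝ) ≤ m := by exact_mod_cast hd k
      have hdk0 : (0:ℝ) ≤ d k := Nat.cast_nonneg _
      set x : ℝ := ((m:ℝ) - d k)/m with hxdef
      have hx0 : 0 ≤ x := by apply div_nonneg <;> linarith
      have hx1 : x ≤ 1 := by rw [div_le_one hmR]; linarith
      have harg : (d k : ℝ) * Real.pi / (2*m) = Real.pi/2 - x * (Real.pi/2) := by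
        rw [hxdef]; field_simp; ring
      rw [harg, Real.sin_pi_div_two_sub, Real.cos_sq']
      have ht0 : 0 ≤ x * (Real.pi/2) := by positivity
      have hs1 : Real.sin (x * (Real.pi/2)) ≤ x * (Real.pi/2) := Real.sin_le ht0
      have hs0 : 0 ≤ Real.sin (x * (Real.pi/2)) :=
        Real.sin_nonneg_of_nonneg_of_le_pi ht0 (by nlinarith)
      nlinarith [mul_self_le_mul_self hs0 hs1, mul_nonneg hx0 (sub_nonneg.mpr hx1),
        sq_nonneg Real.pi]
    have hsum : ∑ k, (d k : ℝ) = 7/8 * m * N := by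
      field_simp at havg; linarith [havg]
    have hS : ∑ k, ((m:ℝ) - d k)/m = N/8 := by
      rw [← Finset.sum_div, Finset.sum_sub_distrib, Finset.sum_const, Finset.card_univ,
        Fintype.card_fin, hsum]
      field_simp; ring
    have h1 : ∑ k, (1 - Real.pi^2/4 * (((m:ℝ) - d k)/m)) ≤
        ∑ k, Real.sin (d k * Real.pi / (2*m)) ^ 2 :=
      Finset.sum_le_sum fun k _ => key k
    have h2 : ∑ k, (1 - Real.pi^2/4 * (((m:ℝ) - d k)/m)) = N * (1 - Real.pi^2/32) := by
      rw [Finset.sum_sub_distrib, Finset.sum_const, Finset.card_univ, Fintype.card_fin,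
        ← Finset.mul_sum, hS]
      simp; ring
    calc 1 - Real.pi^2/32 = (1/N) * (N * (1 - Real.pi^2/32)) := by field_simp
      _ ≤ (1/N) * ∑ k, Real.sin (d k * Real.pi / (2*m)) ^ 2 := by
          apply mul_le_mul_of_nonneg_left _ (by positivity)
          linarith [h1, h2]
  · nlinarith [Real.pi_lt_d6, Real.pi_gt_d6]
end

section
/- Let N ≥ 1, m ≥ 1, and d : Fin N → ℕ with d_k ≤ m and (1/N)·∑_k d_k = (7/8)·m. Then 1 − π²/32 ≤ (1/N)·∑_k sin²(d_k π/(2m)) ≤ sin(7π/16), i.e., 0.691 < Pr ≤ 0.981 where Pr is the first-iteration success probability. -/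
open Real Finset

theorem success_prob_bounds (N m : ℕ) (hN : 1 ≤ N) (hm : 1 ≤ m)
    (d : Fin N → ℕ) (hd : ∀ k, d k ≤ m)
    (havg : (1 / N : ℝ) * ∑ k, (d k : ℝ) = (7 / 8) * m) :
    1 - Real.pi ^ 2 / 32 ≤ (1 / N : ℝ) * ∑ k, Real.sin (d k * Real.pi / (2 * m)) ^ 2 ∧
    (1 / N : ℝ) * ∑ k, Real.sin (d k * Real.pi / (2 * m)) ^ 2 ≤ Real.sin (7 * Real.pi / 16) := by
  have hNpos : (0:ℝ) < N := by exact_mod_cast hN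
  have hmpos : (0:ℝ) < m := by exact_mod_cast hm
  have hπ := Real.pi_pos
  have hsum : ∑ k, (d k : ℝ) = 7/8 * m * N := by
    have := havg
    field_simp at this
    linarith
  -- bounds on x k
  have hx0 : ∀ k : Fin N, 0 ≤ (d k : ℝ) * Real.pi / (2 * m) := fun k => by positivity
  have hxle : ∀ k : Fin N, (d k : ℝ) * Real.pi / (2 * m) ≤ Real.pi / 2 := by
    intro k
    rw [div_le_div_iff₀ (by positivity) (by norm_num)]
    have : (d k : ℝ) ≤ m := by exact_mod_cast hd k
    nlinarith
  constructor
  · -- lower bound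
    have key : ∀ k : Fin N, 1 - Real.pi/2 * (Real.pi/2 - (d k : ℝ) * Real.pi / (2*m))
        ≤ Real.sin ((d k : ℝ) * Real.pi / (2 * m)) ^ 2 := by
      intro k
      set x := (d k : ℝ) * Real.pi / (2 * m) with hx
      have h1 : Real.sin x ^ 2 = 1 - Real.cos x ^ 2 := Real.sin_sq x
      have h2 : Real.cos x = Real.sin (Real.pi/2 - x) := (Real.sin_pi_div_two_sub x).symm
      have h3 : Real.sin (Real.pi/2 - x) ≤ Real.pi/2 - x :=
        Real.sin_le (by linarith [hxle k])
      have h4 : 0 ≤ Real.sin (Real.pi/2 - x) :=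
        Real.sin_nonneg_of_nonneg_of_le_pi (by linarith [hxle k]) (by linarith [hx0 k])
      have h5 : Real.pi/2 - x ≤ Real.pi/2 := by linarith [hx0 k]
      nlinarith
    have hsumle : ∑ k, (1 - Real.pi/2 * (Real.pi/2 - (d k : ℝ) * Real.pi / (2*m)))
        ≤ ∑ k, Real.sin ((d k : ℝ) * Real.pi / (2 * m)) ^ 2 :=
      Finset.sum_le_sum (fun k _ => key k)
    have heq : ∀ k : Fin N, (1:ℝ) - Real.pi/2 * (Real.pi/2 - (d k : ℝ) * Real.pi / (2*m))
        = (1 - Real.pi^2/4) + (Real.pi^2/(4*m)) * (d k : ℝ) := by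
      intro k; field_simp; ring
    have hsumeq : ∑ k, ((1:ℝ) - Real.pi/2 * (Real.pi/2 - (d k : ℝ) * Real.pi / (2*m)))
        = N * (1 - Real.pi^2/32) := by
      rw [Finset.sum_congr rfl (fun k _ => heq k), Finset.sum_add_distrib,
        Finset.sum_const, ← Finset.mul_sum, hsum]
      simp only [Finset.card_univ, Fintype.card_fin, nsmul_eq_mul]
      field_simp
      ring
    rw [hsumeq] at hsumle
    have h6 : (1/N : ℝ) * (N * (1 - Real.pi^2/32)) = 1 - Real.pi^2/32 := by
      field_simp
    calc (1 - Real.pi^2/32 : ℝ) = (1/N) * (N * (1 - Real.pi^2/32)) := h6.symm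
      _ ≤ (1/N) * ∑ k, Real.sin ((d k : ℝ) * Real.pi / (2 * m)) ^ 2 := by
          apply mul_le_mul_of_nonneg_left hsumle (by positivity)
  · -- upper bound
    have step1 : ∑ k, Real.sin ((d k : ℝ) * Real.pi / (2 * m)) ^ 2
        ≤ ∑ k, Real.sin ((d k : ℝ) * Real.pi / (2 * m)) := by
      apply Finset.sum_le_sum
      intro k _
      have hs0 : 0 ≤ Real.sin ((d k : ℝ) * Real.pi / (2 * m)) :=
        Real.sin_nonneg_of_nonneg_of_le_pi (hx0 k) (by linarith [hxle k])
      have hs1 : Real.sin ((d k : ℝ) * Real.pi / (2 * m)) ≤ 1 := Real.sin_le_one _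
      nlinarith
    have jensen : ∑ k, (1/N : ℝ) • Real.sin ((d k : ℝ) * Real.pi / (2 * m))
        ≤ Real.sin (∑ k, (1/N : ℝ) • ((d k : ℝ) * Real.pi / (2 * m))) := by
      apply strictConcaveOn_sin_Icc.concaveOn.le_map_sum
      · intro i _; positivity
      · rw [Finset.sum_const, Finset.card_univ, Fintype.card_fin, nsmul_eq_mul]
        field_simp
      · intro i _
        exact ⟨hx0 i, by linarith [hxle i]⟩
    have havgx : ∑ k, (1/N : ℝ) • ((d k : ℝ) * Real.pi / (2 * m)) = 7 * Real.pi / 16 := by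
      simp only [smul_eq_mul]
      rw [← Finset.mul_sum]
      have : ∑ k, (d k : ℝ) * Real.pi / (2 * m) = (∑ k, (d k : ℝ)) * Real.pi / (2 * m) := by
        rw [← Finset.sum_div, ← Finset.sum_mul]
      rw [this, hsum]
      field_simp
      ring
    rw [havgx] at jensen
    simp only [smul_eq_mul] at jensen
    rw [← Finset.mul_sum] at jensen
    calc (1 / N : ℝ) * ∑ k, Real.sin ((d k : ℝ) * Real.pi / (2 * m)) ^ 2
        ≤ (1/N) * ∑ k, Real.sin ((d k : ℝ) * Real.pi / (2 * m)) := by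
          apply mul_le_mul_of_nonneg_left step1 (by positivity)
      _ ≤ Real.sin (7 * Real.pi / 16) := jensen
end
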